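/- No one-way deterministic one-counter automaton (1D1CA) over the alphabet {0,#} solves the promise problem XOR-EQ, i.e., for every 1D1CA M it is not the case that M accepts every yes-instance of XOR-EQ and rejects every no-instance of XOR-EQ. -/

import Mathlib

/-- Input symbols extended with the left (`cent`) and right (`dollar`) end-markers. -/
inductive TSym (α : Type) : Type
  | cent : TSym α
  | letter : α → TSym α
  | dollar : TSym α

/-- The tape content `¢ w $` for an input word `w`. -/
def tagged {α : Type} (w : List α) : List (TSym α) :=
  TSym.cent :: (w.map TSym.letter ++ [TSym.dollar])

/-- A one-way deterministic one-counter automaton. -/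
structure OneD1CA (α : Type) where
  Q : Type
  [fintypeQ : Fintype Q]
  [decQ : DecidableEq Q]
  q0 : Q
  acc : Set Q
  m : ℕ
  δ : Q → TSym α → Bool → Q × ℤ
  bound : ∀ q σ z, |(δ q σ z).2| ≤ (m : ℤ)

attribute [instance] OneD1CA.fintypeQ OneD1CA.decQ

namespace OneD1CA

variable {α : Type} (M : OneD1CA α)

/-- One computation step on a configuration (state, counter value). -/
def step (p : M.Q × ℤ) (σ : TSym α) : M.Q × ℤ :=
  ((M.δ p.1 σ (decide (p.2 = 0))).1, p.2 + (M.δ p.1 σ (decide (p.2 = 0))).2)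

/-- Configuration reached from the initial configuration after reading a list of tape symbols. -/
def confAfter (l : List (TSym α)) : M.Q × ℤ :=
  l.foldl M.step (M.q0, 0)

/-- The automaton accepts `w` iff the state after reading `¢ w $` is accepting. -/
def accepts (w : List α) : Prop :=
  (M.confAfter (tagged w)).1 ∈ M.acc

/-- The automaton recognizes the language `L` if it accepts exactly the members of `L`. -/
def recognizes (L : Set (List α)) : Prop :=
  ∀ w : List α, M.accepts w ↔ w ∈ L

end OneD1CA

/-- The alphabet `{0, #}` (`z` is the symbol `0`, `h` is the symbol `#`). -/
inductive XSym : Type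
  | z : XSym
  | h : XSym
deriving DecidableEq

/-- The block `0^n`. -/
def zeros (n : ℕ) : List XSym := List.replicate n XSym.z

/-- The string `0^a # 0^b # 0^c # 0^d # 0^{k1} # 0^{k2} # 0^{l1} # 0^{l2}`. -/
def xweWord (a b c d k1 k2 l1 l2 : ℕ) : List XSym :=
  zeros a ++ [XSym.h] ++ zeros b ++ [XSym.h] ++ zeros c ++ [XSym.h] ++ zeros d ++ [XSym.h] ++
    zeros k1 ++ [XSym.h] ++ zeros k2 ++ [XSym.h] ++ zeros l1 ++ [XSym.h] ++ zeros l2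

/-- `(-1) ^ [u = v]`. -/
def xweSign (u v : ℕ) : ℤ := if u = v then -1 else 1

/-- The promise of the problem `XOR-EQ`. -/
def xwePromise (a b c d k1 k2 l1 l2 : ℕ) : Prop :=
  0 < a ∧ Even a ∧ 0 < b ∧ Even b ∧ 0 < c ∧ Even c ∧ 0 < d ∧ Even d ∧
    (a : ℤ) - (c : ℤ) + xweSign a c * ((k1 : ℤ) - (k2 : ℤ)) =
      (b : ℤ) - (d : ℤ) + xweSign b d * ((l1 : ℤ) - (l2 : ℤ))

/-- Yes-instances of `XOR-EQ`: promised strings where exactly one of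
`a = c`, `b = d` holds. -/
def XorEqYes : Set (List XSym) :=
  {w | ∃ a b c d k1 k2 l1 l2 : ℕ, xwePromise a b c d k1 k2 l1 l2 ∧
    Xor' (a = c) (b = d) ∧ w = xweWord a b c d k1 k2 l1 l2}

/-- No-instances of `XOR-EQ`: the remaining promised strings. -/
def XorEqNo : Set (List XSym) :=
  {w | ∃ a b c d k1 k2 l1 l2 : ℕ, xwePromise a b c d k1 k2 l1 l2 ∧
    ¬ Xor' (a = c) (b = d) ∧ w = xweWord a b c d k1 k2 l1 l2}


/-!
After reading a prefix `0^{2i} # 0^{2j} #` with `i, j ≤ n`, a 1D1CA is in one of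
`|Q| (2m (4n+3) + 1)` configurations, since its counter moves by at most `m` per symbol. For large
`n` this is fewer than the `n²` prefixes, so two distinct prefixes `(i, j) ≠ (i', j')` lead to the
same configuration and hence get the same verdict on every common suffix. But the remaining six
blocks can always be chosen so that the first word is a yes-instance and the second a no-instance:
if `i = i'` take `c = 2i + 2`, `d = 2j`, otherwise `c = 2i`, `d = 2j + 2j' + 2`, and solve the two
promise equations for `k₁ - k₂` and `l₁ - l₂`.
-/

namespace OneD1CA

variable {α : Type} (M : OneD1CA α)

def prefixConf (u : List α) : M.Q × ℤ :=
  M.confAfter (TSym.cent :: u.map TSym.letter)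

theorem accepts_append_iff (u s : List α) :
    M.accepts (u ++ s) ↔
      ((s.map TSym.letter ++ [TSym.dollar]).foldl M.step (M.prefixConf u)).1 ∈ M.acc := by
  simp [accepts, prefixConf, confAfter, tagged, List.foldl_append]

theorem accepts_append_iff_of_prefixConf_eq {u v : List α} (h : M.prefixConf u = M.prefixConf v)
    (s : List α) : M.accepts (u ++ s) ↔ M.accepts (v ++ s) := by
  rw [accepts_append_iff, accepts_append_iff, h]

theorem abs_foldl_step_le (l : List (TSym α)) (p : M.Q × ℤ) :
    |(l.foldl M.step p).2| ≤ |p.2| + M.m * l.length := by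
  induction l generalizing p with
  | nil => simp
  | cons σ l ih =>
    have hstep : |(M.step p σ).2| ≤ |p.2| + M.m :=
      (abs_add_le _ _).trans (add_le_add_right (M.bound _ _ _) _)
    calc |((σ :: l).foldl M.step p).2| ≤ |(M.step p σ).2| + M.m * l.length := ih _
      _ ≤ |p.2| + M.m * (σ :: l).length := by push_cast [List.length_cons]; linarith

theorem abs_prefixConf_le (u : List α) : |(M.prefixConf u).2| ≤ M.m * (u.length + 1) := by
  have h := M.abs_foldl_step_le (TSym.cent :: u.map TSym.letter) (M.q0, 0)
  rwa [List.length_cons, List.length_map, abs_zero, zero_add, Nat.cast_succ] at h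

theorem exists_ne_prefixConf_eq {ι : Type*} (D : Finset ι) (u : ι → List α) (L : ℕ)
    (hL : ∀ x ∈ D, (u x).length + 1 ≤ L)
    (hcard : Fintype.card M.Q * (2 * M.m * L + 1) < D.card) :
    ∃ x ∈ D, ∃ y ∈ D, x ≠ y ∧ M.prefixConf (u x) = M.prefixConf (u y) := by
  let B : ℤ := M.m * L
  let T : Finset (M.Q × ℤ) := Finset.univ ×ˢ Finset.Icc (-B) B
  have hT : T.card = Fintype.card M.Q * (2 * M.m * L + 1) := by
    have hB : B + 1 - -B = ((2 * M.m * L + 1 : ℕ) : ℤ) := by push_cast [B]; ring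
    simp only [T, Finset.card_product, Finset.card_univ, Int.card_Icc, hB, Int.toNat_natCast]
  have hmaps : ∀ x ∈ D, M.prefixConf (u x) ∈ T := fun x hx => by
    have hlen : (M.m : ℤ) * ((u x).length + 1) ≤ B := by
      simp only [B]
      exact_mod_cast Nat.mul_le_mul_left M.m (hL x hx)
    simpa [T] using abs_le.mp ((M.abs_prefixConf_le (u x)).trans hlen)
  exact Finset.exists_ne_map_eq_of_card_lt_of_maps_to (hT ▸ hcard) hmaps

end OneD1CA

def xwePrefix (a b : ℕ) : List XSym :=
  zeros a ++ [XSym.h] ++ zeros b ++ [XSym.h]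

def xweSuffix (c d k1 k2 l1 l2 : ℕ) : List XSym :=
  zeros c ++ [XSym.h] ++ zeros d ++ [XSym.h] ++ zeros k1 ++ [XSym.h] ++ zeros k2 ++ [XSym.h] ++
    zeros l1 ++ [XSym.h] ++ zeros l2

theorem length_xwePrefix (a b : ℕ) : (xwePrefix a b).length = a + b + 2 := by
  simp [xwePrefix, zeros]
  omega

theorem xwePrefix_append_xweSuffix (a b c d k1 k2 l1 l2 : ℕ) :
    xwePrefix a b ++ xweSuffix c d k1 k2 l1 l2 = xweWord a b c d k1 k2 l1 l2 := by
  simp [xwePrefix, xweSuffix, xweWord]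

theorem xwePromise_two_mul {i j c d : ℕ} (hi : 0 < i) (hj : 0 < j) (hc : 0 < c) (hd : 0 < d)
    {k1 k2 l1 l2 : ℕ}
    (h : (2 * i : ℤ) - 2 * c + xweSign (2 * i) (2 * c) * (k1 - k2) =
      2 * j - 2 * d + xweSign (2 * j) (2 * d) * (l1 - l2)) :
    xwePromise (2 * i) (2 * j) (2 * c) (2 * d) k1 k2 l1 l2 :=
  ⟨by omega, even_two_mul i, by omega, even_two_mul j, by omega, even_two_mul c, by omega,
    even_two_mul d, by exact_mod_cast h⟩

theorem exists_separating_suffix {i j i' j' : ℕ} (hi : 0 < i) (hj : 0 < j) (hi' : 0 < i')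
    (hj' : 0 < j') (hne : (i, j) ≠ (i', j')) :
    ∃ s, xwePrefix (2 * i) (2 * j) ++ s ∈ XorEqYes ∧ xwePrefix (2 * i') (2 * j') ++ s ∈ XorEqNo := by
  by_cases hii : i = i'
  · subst hii
    have hjj : j ≠ j' := fun h => hne (h ▸ rfl)
    obtain ⟨l1, l2, hl⟩ : ∃ l1 l2 : ℕ, (l1 : ℤ) - l2 = j - j' := ⟨_, _, Int.toNat_sub_toNat_neg _⟩
    obtain ⟨k1, k2, hk⟩ : ∃ k1 k2 : ℕ, (k1 : ℤ) - k2 = 2 - (j - j') :=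
      ⟨_, _, Int.toNat_sub_toNat_neg _⟩
    have hyes : xwePromise (2 * i) (2 * j) (2 * (i + 1)) (2 * j) k1 k2 l1 l2 := by
      refine xwePromise_two_mul hi hj (by omega) hj ?_
      simp only [xweSign, if_neg (by omega : 2 * i ≠ 2 * (i + 1))]
      push_cast
      linarith
    have hno : xwePromise (2 * i) (2 * j') (2 * (i + 1)) (2 * j) k1 k2 l1 l2 := by
      refine xwePromise_two_mul hi hj' (by omega) hj ?_
      simp only [xweSign, if_neg (by omega : 2 * i ≠ 2 * (i + 1)),
        if_neg (by omega : 2 * j' ≠ 2 * j)]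
      push_cast
      linarith
    refine ⟨xweSuffix (2 * (i + 1)) (2 * j) k1 k2 l1 l2,
      ⟨_, _, _, _, _, _, _, _, hyes, Or.inr ⟨rfl, by omega⟩, xwePrefix_append_xweSuffix ..⟩,
      ⟨_, _, _, _, _, _, _, _, hno, fun h => by rcases h with h | h <;> omega,
        xwePrefix_append_xweSuffix ..⟩⟩
  · obtain ⟨k1, k2, hk⟩ : ∃ k1 k2 : ℕ, (k1 : ℤ) - k2 = j' - j - i' + i :=
      ⟨_, _, Int.toNat_sub_toNat_neg _⟩
    obtain ⟨l1, l2, hl⟩ : ∃ l1 l2 : ℕ, (l1 : ℤ) - l2 = 2 * j' + 2 - (j' - j - i' + i) :=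
      ⟨_, _, Int.toNat_sub_toNat_neg _⟩
    have hyes : xwePromise (2 * i) (2 * j) (2 * i) (2 * (j + j' + 1)) k1 k2 l1 l2 := by
      refine xwePromise_two_mul hi hj hi (by omega) ?_
      simp only [xweSign, if_neg (by omega : 2 * j ≠ 2 * (j + j' + 1))]
      push_cast
      linarith
    have hno : xwePromise (2 * i') (2 * j') (2 * i) (2 * (j + j' + 1)) k1 k2 l1 l2 := by
      refine xwePromise_two_mul hi' hj' hi (by omega) ?_
      simp only [xweSign, if_neg (by omega : 2 * i' ≠ 2 * i),
        if_neg (by omega : 2 * j' ≠ 2 * (j + j' + 1))]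
      push_cast
      linarith
    refine ⟨xweSuffix (2 * i) (2 * (j + j' + 1)) k1 k2 l1 l2,
      ⟨_, _, _, _, _, _, _, _, hyes, Or.inl ⟨rfl, by omega⟩, xwePrefix_append_xweSuffix ..⟩,
      ⟨_, _, _, _, _, _, _, _, hno, fun h => by rcases h with h | h <;> omega,
        xwePrefix_append_xweSuffix ..⟩⟩

/-- no 1D1CA solves `XOR-EQ`. -/
theorem stmt1 (M : OneD1CA XSym) :
    ¬ ((∀ w ∈ XorEqYes, M.accepts w) ∧ (∀ w ∈ XorEqNo, ¬ M.accepts w)) := by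
  rintro ⟨hyes, hno⟩
  set C := Fintype.card M.Q * (14 * M.m + 1)
  let n := C + 1
  have hn : 1 ≤ n := Nat.le_add_left 1 C
  let D := Finset.Icc 1 n ×ˢ Finset.Icc 1 n
  have hcard : Fintype.card M.Q * (2 * M.m * (4 * n + 3) + 1) < D.card := by
    rw [Finset.card_product, Nat.card_Icc, Nat.add_sub_cancel]
    calc Fintype.card M.Q * (2 * M.m * (4 * n + 3) + 1)
        ≤ Fintype.card M.Q * ((14 * M.m + 1) * n) := Nat.mul_le_mul_left _ (by nlinarith [hn])
      _ = C * n := by ring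
      _ < n * n := Nat.mul_lt_mul_of_lt_of_le (by omega) le_rfl (by omega)
  have hlen : ∀ p ∈ D, (xwePrefix (2 * p.1) (2 * p.2)).length + 1 ≤ 4 * n + 3 := by
    intro p hp
    simp only [D, Finset.mem_product, Finset.mem_Icc] at hp
    rw [length_xwePrefix]
    omega
  obtain ⟨⟨i, j⟩, hp, ⟨i', j'⟩, hp', hne, hconf⟩ :=
    M.exists_ne_prefixConf_eq D (fun p => xwePrefix (2 * p.1) (2 * p.2)) _ hlen hcard
  simp only [D, Finset.mem_product, Finset.mem_Icc] at hp hp'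
  obtain ⟨s, hs_yes, hs_no⟩ :=
    exists_separating_suffix hp.1.1 hp.2.1 hp'.1.1 hp'.2.1 hne
  exact hno _ hs_no ((M.accepts_append_iff_of_prefixConf_eq hconf s).mp (hyes _ hs_yes))
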